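/- Let K be a compact subset of ℝ of infinite cardinality. Let m_n(K) denote the infimum of ‖P‖_K over monic real polynomials P of degree n, and let δ_n(K) = sup over x_1,…,x_n ∈ K of ∏_{1 ≤ i ≠ j ≤ n} |x_i − x_j|^{1/(n(n−1))}. Then lim_{n→∞} m_n(K)^{1/n} = lim_{n→∞} δ_n(K); this common value is denoted cap(K), the logarithmic capacity (transfinite diameter) of K. -/

import Mathlib

/-!
Both inequalities come from comparing polynomials with the product
`V(x) = ∏_{i ≠ j} |x_i - x_j|`, so that `δ_n = sup_{K^n} V^{1/(n(n-1))}`.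

`c ≤ d`: let `w` maximise `V` on `K^{n+1}` (a Fekete tuple). Moving `w_i` to `z ∈ K` multiplies
`V(w)` by `(|p_i(z)| / |p_i(w_i)|)^2`, where `p_i = ∏_{j ≠ i} (X - w_j)`, so the monic `p_i` of
degree `n` has sup norm `|p_i(w_i)|` on `K`. Hence `m_n^{n+1} ≤ ∏_i |p_i(w_i)| = V(w)`, that is
`m_n^{1/n} ≤ δ_{n+1}`.

`d ≤ c`: for monic `q_j` of degree `j`, `∏_{i<j} (x_j - x_i)` is the determinant of
`(q_j(x_i))`, hence at most `n! ∏_j ‖q_j‖_K`. If `t > c` we may take `‖q_j‖_K ≤ C t^j`, and since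
`∑_{j<n} j = n(n-1)/2` this gives `δ_n ≤ (n C)^{2/(n-1)} t → t`.
-/

open Polynomial Filter

/-- The sup norm of a real polynomial on a set `K ⊆ ℝ`. -/
noncomputable def supNormOn (K : Set ℝ) (P : Polynomial ℝ) : ℝ :=
  sSup ((fun x => |P.eval x|) '' K)

/-- `m_n(K)`: the infimum of sup norms on `K` of monic real polynomials of degree `n`. -/
noncomputable def chebInf (K : Set ℝ) (n : ℕ) : ℝ :=
  sInf (supNormOn K '' {P : Polynomial ℝ | P.Monic ∧ P.natDegree = n})

/-- The `n`-th diameter `δ_n(K)` of a set `K ⊆ ℝ`. -/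
noncomputable def deltaN (K : Set ℝ) (n : ℕ) : ℝ :=
  sSup {r : ℝ | ∃ x : Fin n → ℝ, (∀ i, x i ∈ K) ∧
    r = (∏ p ∈ Finset.univ.offDiag, |x p.1 - x p.2|) ^ (((n : ℝ) * ((n : ℝ) - 1))⁻¹)}

open Finset Topology

namespace Finset

variable {ι M : Type*} [CommMonoid M]

theorem prod_offDiag_eq_prod_prod_erase [Fintype ι] [DecidableEq ι] (f : ι → ι → M) :
    ∏ p ∈ (univ : Finset ι).offDiag, f p.1 p.2 = ∏ i, ∏ j ∈ univ.erase i, f i j :=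
  prod_finset_product _ _ _ fun p => by simp [eq_comm]

theorem prod_offDiag_insert [DecidableEq ι] {s : Finset ι} {a : ι} (ha : a ∉ s) (f : ι → ι → M) :
    ∏ p ∈ (insert a s).offDiag, f p.1 p.2 =
      (∏ p ∈ s.offDiag, f p.1 p.2) * ∏ j ∈ s, f a j * f j a := by
  rw [offDiag_insert ha, prod_union, prod_union, prod_product, prod_product_right,
    prod_singleton, prod_singleton, mul_assoc, prod_mul_distrib]
  all_goals grind [disjoint_left]

theorem prod_offDiag_eq_prod_Ioi_mul [Fintype ι] [LinearOrder ι] [LocallyFiniteOrderTop ι]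
    (f : ι → ι → M) :
    ∏ p ∈ (univ : Finset ι).offDiag, f p.1 p.2 =
      (∏ i, ∏ j ∈ Ioi i, f i j) * ∏ i, ∏ j ∈ Ioi i, f j i := by
  rw [← prod_filter_mul_prod_filter_not _ fun p => p.1 < p.2,
    prod_finset_product _ univ Ioi fun p => by simp; grind,
    prod_finset_product_right _ univ Ioi fun p => by simp; grind]

end Finset

namespace Matrix

variable {R S n : Type*} [CommRing R] [Nontrivial R] [CommRing S] [LinearOrder S]
  [IsStrictOrderedRing S] [Fintype n] [DecidableEq n]

theorem det_le_factorial_smul_prod {A : Matrix n n R} {abv : AbsoluteValue R S} {b : n → S}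
    (hb : ∀ i j, abv (A i j) ≤ b j) : abv A.det ≤ (Fintype.card n).factorial • ∏ j, b j :=
  calc
    abv A.det = abv (∑ σ : Equiv.Perm n, σ.sign • ∏ j, A (σ j) j) := congr_arg abv (det_apply _)
    _ ≤ ∑ σ : Equiv.Perm n, abv (σ.sign • ∏ j, A (σ j) j) := abv.sum_le _ _
    _ = ∑ σ : Equiv.Perm n, ∏ j, abv (A (σ j) j) :=
      sum_congr rfl fun σ _ => by rw [abv.map_units_int_smul, abv.map_prod]
    _ ≤ ∑ _σ : Equiv.Perm n, ∏ j, b j := by gcongr with σ _ j; exact hb _ _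
    _ = (Fintype.card n).factorial • ∏ j, b j := by simp [Fintype.card_perm]

end Matrix

section SupNorm
variable {K : Set ℝ}

theorem abs_eval_le_supNormOn (hK : IsCompact K) (P : ℝ[X]) {x : ℝ} (hx : x ∈ K) :
    |P.eval x| ≤ supNormOn K P :=
  le_csSup (hK.bddAbove_image (continuous_abs.comp P.continuous).continuousOn) ⟨x, hx, rfl⟩

theorem supNormOn_le (hKne : K.Nonempty) {P : ℝ[X]} {B : ℝ} (h : ∀ x ∈ K, |P.eval x| ≤ B) :
    supNormOn K P ≤ B :=
  csSup_le (hKne.image _) (Set.forall_mem_image.2 h)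

theorem supNormOn_nonneg (K : Set ℝ) (P : ℝ[X]) : 0 ≤ supNormOn K P :=
  Real.sSup_nonneg <| Set.forall_mem_image.2 fun _ _ => abs_nonneg _

theorem chebInf_nonneg (K : Set ℝ) (n : ℕ) : 0 ≤ chebInf K n :=
  Real.sInf_nonneg <| Set.forall_mem_image.2 fun P _ => supNormOn_nonneg K P

theorem chebInf_le_supNormOn {P : ℝ[X]} (hP : P.Monic) :
    chebInf K P.natDegree ≤ supNormOn K P :=
  csInf_le ⟨0, Set.forall_mem_image.2 fun Q _ => supNormOn_nonneg K Q⟩ ⟨P, ⟨hP, rfl⟩, rfl⟩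

theorem exists_monic_supNormOn_lt {n : ℕ} {b : ℝ} (h : chebInf K n < b) :
    ∃ P : ℝ[X], P.Monic ∧ P.natDegree = n ∧ supNormOn K P < b := by
  have hne : {P : ℝ[X] | P.Monic ∧ P.natDegree = n}.Nonempty :=
    ⟨X ^ n, monic_X_pow n, natDegree_X_pow n⟩
  obtain ⟨_, ⟨P, ⟨hP, hdeg⟩, rfl⟩, hlt⟩ := exists_lt_of_csInf_lt (hne.image _) h
  exact ⟨P, hP, hdeg, hlt⟩

end SupNorm

section PairDistProd
variable {ι : Type*} [Fintype ι]

noncomputable def pairDistProd (x : ι → ℝ) : ℝ :=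
  ∏ p ∈ univ.offDiag, |x p.1 - x p.2|

theorem pairDistProd_nonneg (x : ι → ℝ) : 0 ≤ pairDistProd x :=
  prod_nonneg fun _ _ => abs_nonneg _

theorem continuous_pairDistProd : Continuous (pairDistProd : (ι → ℝ) → ℝ) :=
  continuous_finsetProd _ fun p _ => ((continuous_apply p.1).sub (continuous_apply p.2)).abs

theorem pairDistProd_pos {x : ι → ℝ} (hx : Function.Injective x) : 0 < pairDistProd x :=
  prod_pos fun _ hp => abs_pos.2 <| sub_ne_zero.2 <| hx.ne (mem_offDiag.1 hp).2.2

theorem pairDistProd_eq_prod_prod_erase [DecidableEq ι] (x : ι → ℝ) :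
    pairDistProd x = ∏ i, ∏ j ∈ univ.erase i, |x i - x j| :=
  prod_offDiag_eq_prod_prod_erase fun i j => |x i - x j|

theorem pairDistProd_update [DecidableEq ι] (x : ι → ℝ) (i : ι) (z : ℝ) :
    pairDistProd (Function.update x i z) =
      (∏ p ∈ (univ.erase i).offDiag, |x p.1 - x p.2|) * (∏ j ∈ univ.erase i, |z - x j|) ^ 2 := by
  have h := prod_offDiag_insert (notMem_erase i univ)
    fun a b => |Function.update x i z a - Function.update x i z b|
  rw [insert_erase (mem_univ i)] at h
  rw [pairDistProd, h, sq, ← prod_mul_distrib]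
  congr 1
  · refine prod_congr rfl fun p hp => ?_
    obtain ⟨hp1, hp2, -⟩ := mem_offDiag.1 hp
    rw [Function.update_of_ne (ne_of_mem_erase hp1), Function.update_of_ne (ne_of_mem_erase hp2)]
  · refine prod_congr rfl fun j hj => ?_
    rw [Function.update_self, Function.update_of_ne (ne_of_mem_erase hj), abs_sub_comm (x j)]

theorem pairDistProd_eq_det_vandermonde_sq {n : ℕ} (x : Fin n → ℝ) :
    pairDistProd x = (Matrix.vandermonde x).det ^ 2 := by
  rw [pairDistProd, prod_offDiag_eq_prod_Ioi_mul fun a b => |x a - x b|, Matrix.det_vandermonde,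
    ← sq_abs, sq]
  simp only [abs_prod]
  congr 1
  exact prod_congr rfl fun i _ => prod_congr rfl fun j _ => abs_sub_comm _ _

end PairDistProd

section Diameter
variable {K : Set ℝ} {n : ℕ}

theorem inv_natCast_mul_sub_one_nonneg (n : ℕ) : 0 ≤ ((n : ℝ) * ((n : ℝ) - 1))⁻¹ := by
  rcases n with _ | n
  · simp
  · rw [Nat.cast_succ, add_sub_cancel_right]
    positivity

theorem deltaN_eq_sSup_image (K : Set ℝ) (n : ℕ) :
    deltaN K n = sSup ((fun x => pairDistProd x ^ ((n : ℝ) * ((n : ℝ) - 1))⁻¹) ''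
      Set.univ.pi fun _ : Fin n => K) := by
  rw [deltaN]
  congr 1
  ext r
  simp [pairDistProd, eq_comm]

theorem deltaN_le_of_pairDistProd_le (hKne : K.Nonempty) {B : ℝ}
    (h : ∀ x ∈ Set.univ.pi fun _ : Fin n => K, pairDistProd x ≤ B) :
    deltaN K n ≤ B ^ ((n : ℝ) * ((n : ℝ) - 1))⁻¹ := by
  rw [deltaN_eq_sSup_image]
  refine csSup_le ((Set.univ_pi_nonempty_iff.2 fun _ => hKne).image _)
    (Set.forall_mem_image.2 fun x hx => ?_)
  exact Real.rpow_le_rpow (pairDistProd_nonneg x) (h x hx) (inv_natCast_mul_sub_one_nonneg n)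

theorem deltaN_eq_of_isMaxOn {w : Fin n → ℝ} (hw : w ∈ Set.univ.pi fun _ => K)
    (hmax : IsMaxOn pairDistProd (Set.univ.pi fun _ => K) w) :
    deltaN K n = pairDistProd w ^ ((n : ℝ) * ((n : ℝ) - 1))⁻¹ := by
  rw [deltaN_eq_sSup_image]
  refine IsGreatest.csSup_eq ⟨Set.mem_image_of_mem _ hw, Set.forall_mem_image.2 fun x hx => ?_⟩
  exact Real.rpow_le_rpow (pairDistProd_nonneg x) (hmax hx) (inv_natCast_mul_sub_one_nonneg n)

theorem exists_isMaxOn_pairDistProd (hK : IsCompact K) (hKne : K.Nonempty)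
    (ι : Type*) [Fintype ι] :
    ∃ w ∈ Set.univ.pi fun _ : ι => K, IsMaxOn pairDistProd (Set.univ.pi fun _ => K) w :=
  (isCompact_univ_pi fun _ => hK).exists_isMaxOn (Set.univ_pi_nonempty_iff.2 fun _ => hKne)
    continuous_pairDistProd.continuousOn

end Diameter

section Fekete
variable {K : Set ℝ}

theorem prod_abs_sub_le_of_isMaxOn {ι : Type*} [Fintype ι] [DecidableEq ι] {w : ι → ℝ}
    (hw : w ∈ Set.univ.pi fun _ => K) (hmax : IsMaxOn pairDistProd (Set.univ.pi fun _ => K) w)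
    (hpos : 0 < pairDistProd w) (i : ι) {z : ℝ} (hz : z ∈ K) :
    ∏ j ∈ univ.erase i, |z - w j| ≤ ∏ j ∈ univ.erase i, |w i - w j| := by
  have hle : pairDistProd (Function.update w i z) ≤ pairDistProd (Function.update w i (w i)) := by
    rw [Function.update_eq_self]
    refine hmax (Set.mem_univ_pi.2 fun j => ?_)
    rcases eq_or_ne j i with rfl | hj
    · simpa using hz
    · simpa [hj] using hw j trivial
  rw [← Function.update_eq_self i w, pairDistProd_update] at hpos
  rw [pairDistProd_update, pairDistProd_update] at hle
  have hR := (prod_nonneg fun _ _ => abs_nonneg _).lt_of_ne' (left_ne_zero_of_mul hpos.ne')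
  exact (pow_le_pow_iff_left₀ (prod_nonneg fun _ _ => abs_nonneg _)
    (prod_nonneg fun _ _ => abs_nonneg _) two_ne_zero).1 (le_of_mul_le_mul_left hle hR)

theorem chebInf_le_prod_abs_sub_of_isMaxOn {n : ℕ} {w : Fin (n + 1) → ℝ}
    (hw : w ∈ Set.univ.pi fun _ => K) (hmax : IsMaxOn pairDistProd (Set.univ.pi fun _ => K) w)
    (hpos : 0 < pairDistProd w) (i : Fin (n + 1)) :
    chebInf K n ≤ ∏ j ∈ univ.erase i, |w i - w j| := by
  set P : ℝ[X] := ∏ j ∈ univ.erase i, (X - C (w j))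
  have hP : P.Monic := monic_prod_of_monic _ _ fun j _ => monic_X_sub_C (w j)
  have hdeg : P.natDegree = n := by
    simp [P, natDegree_prod_of_monic _ _ fun j _ => monic_X_sub_C (w j)]
  calc chebInf K n = chebInf K P.natDegree := by rw [hdeg]
    _ ≤ supNormOn K P := chebInf_le_supNormOn hP
    _ ≤ ∏ j ∈ univ.erase i, |w i - w j| := supNormOn_le ⟨w i, hw i trivial⟩ fun z hz => by
      simpa [P, eval_prod, abs_prod] using prod_abs_sub_le_of_isMaxOn hw hmax hpos i hz

theorem chebInf_rpow_inv_le_deltaN_succ (hK : IsCompact K) (hKinf : K.Infinite) (n : ℕ) :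
    chebInf K n ^ (n : ℝ)⁻¹ ≤ deltaN K (n + 1) := by
  obtain ⟨w, hw, hmax⟩ := exists_isMaxOn_pairDistProd hK hKinf.nonempty (Fin (n + 1))
  have hpos : 0 < pairDistProd w := by
    let y : Fin (n + 1) → ℝ := fun i => hKinf.natEmbedding _ i
    have hy : Function.Injective y :=
      Subtype.coe_injective.comp ((hKinf.natEmbedding _).injective.comp Fin.val_injective)
    exact (pairDistProd_pos hy).trans_le
      (hmax (Set.mem_univ_pi.2 fun i => (hKinf.natEmbedding _ i).2))
  have hpow : chebInf K n ^ (n + 1) ≤ pairDistProd w :=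
    calc chebInf K n ^ (n + 1) = ∏ _i : Fin (n + 1), chebInf K n := by simp
      _ ≤ ∏ i, ∏ j ∈ univ.erase i, |w i - w j| :=
        prod_le_prod (fun _ _ => chebInf_nonneg K n) fun i _ =>
          chebInf_le_prod_abs_sub_of_isMaxOn hw hmax hpos i
      _ = pairDistProd w := (pairDistProd_eq_prod_prod_erase w).symm
  have hexp :
      ((n + 1 : ℕ) : ℝ) * (((n + 1 : ℕ) : ℝ) * (((n + 1 : ℕ) : ℝ) - 1))⁻¹ = (n : ℝ)⁻¹ := by
    rw [Nat.cast_succ, add_sub_cancel_right, mul_inv, ← mul_assoc, mul_inv_cancel₀ (by positivity),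
      one_mul]
  rw [deltaN_eq_of_isMaxOn hw hmax, ← hexp, Real.rpow_mul (chebInf_nonneg K n),
    Real.rpow_natCast]
  exact Real.rpow_le_rpow (pow_nonneg (chebInf_nonneg K n) _) hpow
    (inv_natCast_mul_sub_one_nonneg _)

end Fekete

section Vandermonde
variable {K : Set ℝ}

theorem pairDistProd_le_sq_factorial_mul_prod (hK : IsCompact K) {n : ℕ} {q : Fin n → ℝ[X]}
    (hmon : ∀ j, (q j).Monic) (hdeg : ∀ j, (q j).natDegree = j) {x : Fin n → ℝ}
    (hx : x ∈ Set.univ.pi fun _ => K) :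
    pairDistProd x ≤ (n.factorial * ∏ j, supNormOn K (q j)) ^ 2 := by
  have hdet := Matrix.det_le_factorial_smul_prod (abv := AbsoluteValue.abs)
    (A := Matrix.of fun i j => (q j).eval (x i))
    fun i j => abs_eval_le_supNormOn hK (q j) (hx i trivial)
  rw [Fintype.card_fin, nsmul_eq_mul] at hdet
  rw [pairDistProd_eq_det_vandermonde_sq,
    Matrix.det_eval_matrixOfPolynomials_eq_det_vandermonde x q hdeg hmon, ← sq_abs]
  exact pow_le_pow_left₀ (abs_nonneg _) hdet 2

theorem pairDistProd_le_mul_pow (hK : IsCompact K) {C t : ℝ} {q : ℕ → ℝ[X]}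
    (hmon : ∀ j, (q j).Monic) (hdeg : ∀ j, (q j).natDegree = j)
    (hle : ∀ j, supNormOn K (q j) ≤ C * t ^ j) {n : ℕ} {x : Fin n → ℝ}
    (hx : x ∈ Set.univ.pi fun _ => K) :
    pairDistProd x ≤ (((n : ℝ) * C) ^ n * t ^ (∑ j ∈ range n, j)) ^ 2 := by
  have hnorm_nonneg : 0 ≤ ∏ j : Fin n, supNormOn K (q j) :=
    prod_nonneg fun j _ => supNormOn_nonneg K _
  refine (pairDistProd_le_sq_factorial_mul_prod hK (fun j => hmon j) (fun j => hdeg j) hx).trans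
    (pow_le_pow_left₀ (mul_nonneg (Nat.cast_nonneg _) hnorm_nonneg) ?_ 2)
  calc (n.factorial : ℝ) * ∏ j : Fin n, supNormOn K (q j)
      ≤ (n : ℝ) ^ n * ∏ j : Fin n, (C * t ^ (j : ℕ)) :=
        mul_le_mul (by exact_mod_cast n.factorial_le_pow)
          (prod_le_prod (fun j _ => supNormOn_nonneg K _) fun j _ => hle j) hnorm_nonneg
          (by positivity)
    _ = ((n : ℝ) * C) ^ n * t ^ (∑ j ∈ range n, j) := by
        rw [prod_mul_distrib, prod_const, prod_pow_eq_pow_sum,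
          Fin.sum_univ_eq_sum_range (fun j => j), card_univ, Fintype.card_fin, mul_pow, mul_assoc]

theorem deltaN_le_mul_rpow (hK : IsCompact K) (hKne : K.Nonempty) {C t : ℝ} (hC : 0 ≤ C)
    (ht : 0 ≤ t) (hq : ∀ j, ∃ q : ℝ[X], q.Monic ∧ q.natDegree = j ∧ supNormOn K q ≤ C * t ^ j)
    {n : ℕ} (hn : 2 ≤ n) :
    deltaN K n ≤ ((n : ℝ) * C) ^ (2 / ((n : ℝ) - 1)) * t := by
  choose q hmon hdeg hle using hq
  have hsum : ((∑ j ∈ range n, j : ℕ) : ℝ) * 2 = n * (n - 1) := by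
    have := congrArg (Nat.cast (R := ℝ)) (sum_range_id_mul_two n)
    rwa [Nat.cast_mul, Nat.cast_mul, Nat.cast_sub (by omega), Nat.cast_one, Nat.cast_ofNat]
      at this
  have hn' : (n : ℝ) * ((n : ℝ) - 1) ≠ 0 := by
    have : (2 : ℝ) ≤ n := by exact_mod_cast hn
    nlinarith
  refine (deltaN_le_of_pairDistProd_le hKne
    fun x hx => pairDistProd_le_mul_pow hK hmon hdeg hle hx).trans_eq ?_
  rw [mul_pow, ← pow_mul, ← pow_mul, Real.mul_rpow (by positivity) (by positivity),
    ← Real.rpow_natCast, ← Real.rpow_natCast t, ← Real.rpow_mul (by positivity),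
    ← Real.rpow_mul ht]
  congr 1
  · congr 1
    rw [Nat.cast_mul, Nat.cast_ofNat]
    field_simp
  · rw [Nat.cast_mul, Nat.cast_ofNat, hsum, mul_inv_cancel₀ hn', Real.rpow_one]

end Vandermonde

theorem tendsto_natCast_mul_rpow_two_div_sub_one {C : ℝ} (hC : 0 < C) :
    Tendsto (fun n : ℕ => ((n : ℝ) * C) ^ (2 / ((n : ℝ) - 1))) atTop (𝓝 1) := by
  have hpow : Tendsto (fun n : ℕ => (n : ℝ) ^ (2 / (1 * (n : ℝ) + -1))) atTop (𝓝 1) :=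
    (tendsto_rpow_div_mul_add 2 1 (-1) one_ne_zero.symm).comp tendsto_natCast_atTop_atTop
  simp only [one_mul, ← sub_eq_add_neg] at hpow
  have hexp : Tendsto (fun n : ℕ => 2 / ((n : ℝ) - 1)) atTop (𝓝 0) :=
    tendsto_const_nhds.div_atTop
      (tendsto_atTop_add_const_right _ (-1) tendsto_natCast_atTop_atTop)
  have hconst : Tendsto (fun n : ℕ => C ^ (2 / ((n : ℝ) - 1))) atTop (𝓝 1) := by
    have := (Real.continuousAt_const_rpow (b := 0) hC.ne').tendsto.comp hexp
    rwa [Real.rpow_zero] at this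
  simpa [Real.mul_rpow (Nat.cast_nonneg _) hC.le] using hpow.mul hconst

theorem exists_monic_supNormOn_le_mul_pow {K : Set ℝ} {t : ℝ} (ht : 0 < t)
    (h : ∀ᶠ j : ℕ in atTop, chebInf K j ^ (j : ℝ)⁻¹ < t) :
    ∃ C > 0, ∀ j, ∃ q : ℝ[X], q.Monic ∧ q.natDegree = j ∧ supNormOn K q ≤ C * t ^ j := by
  have hq : ∀ j, ∃ q : ℝ[X], q.Monic ∧ q.natDegree = j ∧ supNormOn K q < chebInf K j + t ^ j :=
    fun j => exists_monic_supNormOn_lt (lt_add_of_pos_right _ (pow_pos ht j))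
  choose q hmon hdeg hlt using hq
  have hnorm : ∀ j, ‖supNormOn K (q j)‖ = supNormOn K (q j) ∧ ‖t ^ j‖ = t ^ j := fun j =>
    ⟨Real.norm_of_nonneg (supNormOn_nonneg K _), Real.norm_of_nonneg (pow_nonneg ht.le j)⟩
  have hO : (fun j => supNormOn K (q j)) =O[atTop] fun j => t ^ j := by
    refine Asymptotics.IsBigO.of_bound 2 ?_
    filter_upwards [h, eventually_ne_atTop 0] with j hj hj0
    have hcheb := (Real.rpow_inv_lt_iff_of_pos (chebInf_nonneg K j) ht.le
      (Nat.cast_pos.2 (Nat.pos_of_ne_zero hj0))).1 hj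
    rw [Real.rpow_natCast] at hcheb
    rw [(hnorm j).1, (hnorm j).2]
    linarith [hlt j]
  obtain ⟨C, hC, hbound⟩ := Asymptotics.bound_of_isBigO_nat_atTop hO
  refine ⟨C, hC, fun j => ⟨q j, hmon j, hdeg j, ?_⟩⟩
  simpa only [(hnorm j).1, (hnorm j).2] using hbound (pow_ne_zero j ht.ne')

/-- The limit of `m_n(K)^(1/n)` equals the limit of `δ_n(K)`: the two definitions of the
logarithmic capacity (transfinite diameter) of `K` coincide. -/
theorem cap_eq_transfinite_diameter (K : Set ℝ) (hK : IsCompact K) (hKinf : K.Infinite)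
    (c d : ℝ)
    (hc : Tendsto (fun n : ℕ => chebInf K n ^ ((n : ℝ)⁻¹)) atTop (nhds c))
    (hd : Tendsto (fun n : ℕ => deltaN K n) atTop (nhds d)) :
    c = d := by
  have hcd : c ≤ d := le_of_tendsto_of_tendsto' hc (hd.comp (tendsto_add_atTop_nat 1))
    (chebInf_rpow_inv_le_deltaN_succ hK hKinf)
  refine le_antisymm hcd (le_of_forall_gt_imp_ge_of_dense fun t ht => ?_)
  have ht0 : 0 < t :=
    (ge_of_tendsto' hc fun n => Real.rpow_nonneg (chebInf_nonneg K n) _).trans_lt ht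
  obtain ⟨C, hC, hq⟩ := exists_monic_supNormOn_le_mul_pow ht0 (hc.eventually_lt_const ht)
  have hlim := (tendsto_natCast_mul_rpow_two_div_sub_one hC).mul_const t
  rw [one_mul] at hlim
  exact le_of_tendsto_of_tendsto hd hlim (eventually_atTop.2
    ⟨2, fun n hn => deltaN_le_mul_rpow hK hKinf.nonempty hC.le ht0.le hq hn⟩)
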